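/- Let G be a Lie algebra, ρ : G → gl(V) a representation, and T : V → G an O-operator associated to ρ. Then u ∘ v = ρ(T(u))v defines a left-symmetric algebra structure on V, and T is a homomorphism from the sub-adjacent Lie algebra of (V,∘) to G. -/

import Mathlib

theorem O_operator_gives_lsym (F : Type*) [Field F]
    (G : Type*) [LieRing G] [LieAlgebra F G]
    (V : Type*) [AddCommGroup V] [Module F V]
    (ρ : G →ₗ[F] V →ₗ[F] V)
    (hrep : ∀ (x y : G) (v : V), ρ ⁅x, y⁆ v = ρ x (ρ y v) - ρ y (ρ x v))
    (T : V →ₗ[F] G)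
    (hO : ∀ u v : V, ⁅T u, T v⁆ = T (ρ (T u) v - ρ (T v) u)) :
    (∀ u v w : V,
      ρ (T (ρ (T u) v)) w - ρ (T u) (ρ (T v) w)
      = ρ (T (ρ (T v) u)) w - ρ (T v) (ρ (T u) w))
    ∧ (∀ u v : V, T (ρ (T u) v - ρ (T v) u) = ⁅T u, T v⁆) := by
  refine ⟨fun u v w => ?_, fun u v => (hO u v).symm⟩
  -- Left symmetry is the representation identity for ⁅T u, T v⁆, with the bracket rewritten by `hO`.
  have hbracket := hrep (T u) (T v) w
  rw [hO u v, map_sub, map_sub, LinearMap.sub_apply] at hbracket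
  exact sub_eq_sub_iff_sub_eq_sub.mpr hbracket
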